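/- Let h₁ ≥ 2 be an integer, let q_n ≥ 2 be any sequence of integers, set h_{n+1} = q_n·h_n, and let α_{n,j} ∈ ℤ/h_nℤ for 0 ≤ j < q_n be arbitrary. Define φ_n : ℤ/h_{n+1}ℤ → ℤ/h_nℤ by φ_n(j·h_n + k) = k + α_{n,j} (mod h_n) for 0 ≤ k < h_n, 0 ≤ j < q_n, and let X = {x ∈ Π_n ℤ/h_nℤ : φ_n(x_{n+1}) = x_n for all n} with its Borel σ-algebra. Then there exist a probability measure μ on X whose pushforward under each coordinate map x ↦ x_n is the uniform (normalized counting) measure on ℤ/h_nℤ, and an invertible μ-preserving transformation T : X → X such that for μ-almost every x ∈ X there exists N(x) with (Tx)_n = x_n + 1 for all n ≥ N(x). -/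

import Mathlib

open MeasureTheory
open scoped ENNReal

/-- The projection `φ_α : ℤ/mℤ → ℤ/hℤ` (intended for `m = q·h` and a tuple
`α ∈ (ℤ/hℤ)^q`), `φ_α(j·h + k) = k + α_j (mod h)` for `0 ≤ k < h`, `0 ≤ j < q`. -/
def phiMap {m : ℕ} (h q : ℕ) (α : ZMod q → ZMod h) (x : ZMod m) : ZMod h :=
  ((x.val % h : ℕ) : ZMod h) + α ((x.val / h : ℕ) : ZMod q)

/-- The inverse limit `X = {x ∈ Π_n ℤ/h_nℤ : φ_n(x_{n+1}) = x_n}` of the cyclic groups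
`ℤ/h_nℤ` along the projections `φ_n`, with its (Borel) product–subtype σ-algebra. -/
abbrev InvLimit (h q : ℕ → ℕ) (α : ∀ n, ZMod (q n) → ZMod (h n)) : Type :=
  {x : ∀ n, ZMod (h n) // ∀ n, phiMap (h n) (q n) (α n) (x (n + 1)) = x n}

/-!
Call `x` eventually carry-free if for every `z` there is a level `N` above which the position of
`x (n + 1)` in its block of length `h_n` stays more than `|z|` away from the block ends. Adding
`z` to all coordinates from level `N` on is then compatible with the `φ_n`, and pushing the
result down through `φ_{N-1}, …, φ_0` gives a point of the inverse limit; this shift by `z` is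
a bijection of the carry-free points with inverse the shift by `-z`.

If every marginal is uniform, the position at level `n` is within `|z|` of a block end with
probability at most `2|z| / h_n ≤ 2|z| / 2^n`, so almost every point is carry-free by
Borel–Cantelli. On the points without carry above level `M`, the event `(T x)_n ∈ S` is the
translate by `-z` of an event on `x_M`, and translation preserves the uniform measure on
`ℤ/h_Mℤ`; letting `M → ∞` shows that `T` preserves every marginal, hence the measure. A measure
with uniform marginals is the image of Lebesgue measure on `[0, 1)` under its mixed-radix digits.
-/

open Filter Topology

theorem ZMod.val_add_intCast_div_mod {H d : ℕ} [NeZero H] (hd : d ∣ H) (b : ZMod H) {z : ℤ}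
    (hz : ((b.val % d : ℕ) : ℤ) + z ∈ Set.Ico 0 (d : ℤ)) :
    (b + z).val / d = b.val / d ∧ (((b + z).val % d : ℕ) : ℤ) = (b.val % d : ℕ) + z := by
  rw [Set.mem_Ico] at hz
  obtain ⟨t, rfl⟩ := hd
  have hd0 : 0 < d := by omega
  obtain ⟨s, hs⟩ : ∃ s : ℕ, (s : ℤ) = ((b.val % d : ℕ) : ℤ) + z := ⟨_, Int.toNat_of_nonneg hz.1⟩
  have hsd : s < d := by omega
  have hb : ((b.val : ℕ) : ℤ) + z = (d * (b.val / d) + s : ℕ) := by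
    have := Nat.div_add_mod b.val d
    generalize b.val / d = j at *
    omega
  have hlt : d * (b.val / d) + s < d * t := by
    have hbt : b.val / d < t := Nat.div_lt_of_lt_mul (by simpa [mul_comm] using b.val_lt)
    nlinarith
  have hval : (b + z).val = d * (b.val / d) + s := by
    have hcast : b + (z : ZMod (d * t)) = ((d * (b.val / d) + s : ℕ) : ZMod (d * t)) := by
      rw [← Int.cast_natCast, ← hb]; simp
    rw [hcast, ZMod.val_natCast_of_lt hlt]
  obtain ⟨hdiv, hmod⟩ :=
    (Nat.div_mod_unique (a := (b + z).val) (d := b.val / d) hd0).2 ⟨by omega, hsd⟩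
  exact ⟨hdiv, by rw [hmod, hs]⟩

theorem ZMod.card_filter_val_mod_mem_le {H d r : ℕ} [NeZero H] (hH : H = r * d) (R : Finset ℕ) :
    (Finset.univ.filter fun b : ZMod H => b.val % d ∈ R).card ≤ r * R.card := by
  calc _ ≤ (Finset.range r ×ˢ R).card := by
        refine Finset.card_le_card_of_injOn (fun b => (b.val / d, b.val % d)) ?_ ?_
        · intro b hb
          simp only [Finset.coe_filter, Finset.mem_univ, true_and, Set.mem_ofPred_eq] at hb
          simp only [Finset.coe_product, Finset.coe_range, Set.mem_prod, Set.mem_Iio,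
            Finset.mem_coe]
          exact ⟨Nat.div_lt_of_lt_mul (by simpa [hH, mul_comm] using b.val_lt), hb⟩
        · intro b _ c _ hbc
          simp only [Prod.mk.injEq] at hbc
          exact ZMod.val_injective H
            (by rw [← Nat.div_add_mod b.val d, ← Nat.div_add_mod c.val d, hbc.1, hbc.2])
    _ = r * R.card := by simp

theorem Finset.card_filter_range_add_notMem_Ico_le (d : ℕ) (z : ℤ) :
    ((Finset.range d).filter fun k : ℕ => (k : ℤ) + z ∉ Set.Ico 0 (d : ℤ)).card
      ≤ 2 * z.natAbs := by
  calc _ ≤ (Finset.range z.natAbs ∪ Finset.Ico (d - z.natAbs) d).card := by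
        refine Finset.card_le_card fun k hk => ?_
        simp only [Finset.mem_filter, Finset.mem_range, Set.mem_Ico] at hk
        simp only [Finset.mem_union, Finset.mem_range, Finset.mem_Ico]
        omega
    _ ≤ 2 * z.natAbs := by
        refine (Finset.card_union_le _ _).trans ?_
        simp only [Finset.card_range, Nat.card_Ico]
        omega

theorem Real.Ico_inter_natFloor_mul_eq {N k : ℕ} (hN : 0 < N) (hk : k < N) :
    Set.Ico (0 : ℝ) 1 ∩ {r | ⌊r * N⌋₊ = k} = Set.Ico (k / N : ℝ) ((k + 1) / N) := by
  have hN' : (0 : ℝ) < N := by exact_mod_cast hN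
  ext r
  simp only [Set.mem_inter_iff, Set.mem_Ico, Set.mem_ofPred_eq, div_le_iff₀ hN', lt_div_iff₀ hN']
  constructor
  · rintro ⟨⟨hr0, -⟩, hr⟩
    exact (Nat.floor_eq_iff (by positivity)).1 hr
  · rintro ⟨hkr, hrk⟩
    have hr0 : 0 ≤ r := nonneg_of_mul_nonneg_left ((Nat.cast_nonneg k).trans hkr) hN'
    refine ⟨⟨hr0, ?_⟩, (Nat.floor_eq_iff (by positivity)).2 ⟨hkr, hrk⟩⟩
    have : (k : ℝ) + 1 ≤ N := by exact_mod_cast hk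
    nlinarith

theorem Real.volume_Ico_inter_natFloor_mul_eq {N k : ℕ} (hN : 0 < N) (hk : k < N) :
    volume (Set.Ico (0 : ℝ) 1 ∩ {r | ⌊r * N⌋₊ = k}) = (N : ℝ≥0∞)⁻¹ := by
  have hN' : (0 : ℝ) < N := by exact_mod_cast hN
  rw [Real.Ico_inter_natFloor_mul_eq hN hk, Real.volume_Ico, ← sub_div, add_sub_cancel_left,
    one_div, ENNReal.ofReal_inv_of_pos hN', ENNReal.ofReal_natCast]

theorem phiMap_add_intCast {m d r : ℕ} [NeZero m] (hd : d ∣ m) (β : ZMod r → ZMod d)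
    (b : ZMod m) {z : ℤ} (hz : ((b.val % d : ℕ) : ℤ) + z ∈ Set.Ico 0 (d : ℤ)) :
    phiMap d r β (b + (z : ZMod m)) = phiMap d r β b + z := by
  obtain ⟨hdiv, hmod⟩ := ZMod.val_add_intCast_div_mod hd b hz
  have hmod' : (((b + z).val % d : ℕ) : ZMod d) = ((b.val % d : ℕ) : ZMod d) + z := by
    simpa using congrArg (Int.cast : ℤ → ZMod d) hmod
  rw [phiMap, phiMap, hdiv, hmod']
  ring

section

variable {X : Type*} [mX : MeasurableSpace X]

theorem MeasureTheory.Measure.ext_of_map_eq_of_monotone_comap {Y : ℕ → Type*}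
    [mY : ∀ n, MeasurableSpace (Y n)] {f : ∀ n, X → Y n}
    (hmono : Monotone fun n => (mY n).comap (f n)) (hgen : mX = ⨆ n, (mY n).comap (f n))
    {μ ν : Measure X} [IsFiniteMeasure μ] (hμν : ∀ n, μ.map (f n) = ν.map (f n)) : μ = ν := by
  have hf (n : ℕ) : Measurable (f n) :=
    measurable_iff_comap_le.2 (hgen ▸ le_iSup (fun n => (mY n).comap (f n)) n)
  have hC (n : ℕ) (s : Set X) (hs : MeasurableSet[(mY n).comap (f n)] s) : μ s = ν s := by
    obtain ⟨S, hS, rfl⟩ := hs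
    rw [← Measure.map_apply (hf n) hS, hμν, Measure.map_apply (hf n) hS]
  refine ext_of_generate_finite _
    (hgen.trans (MeasurableSpace.generateFrom_iUnion_measurableSet _).symm)
    (isPiSystem_iUnion_of_monotone _
      (fun n => @MeasurableSpace.isPiSystem_measurableSet _ ((mY n).comap (f n)))
      fun _ _ hnm => hmono hnm) ?_ (hC 0 _ MeasurableSet.univ)
  simp only [Set.mem_iUnion]
  rintro s ⟨n, hs⟩
  exact hC n s hs

theorem MeasureTheory.measure_le_add_measure_compl_of_inter_eq {μ : Measure X} {A B G : Set X}
    (h : A ∩ G = B ∩ G) : μ A ≤ μ B + μ Gᶜ :=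
  calc μ A ≤ μ (A ∩ G) + μ (A \ G) := measure_le_inter_add_sdiff μ A G
    _ ≤ μ B + μ Gᶜ := add_le_add (h ▸ measure_mono Set.inter_subset_left)
      (measure_mono (Set.sdiff_subset_compl A G))

theorem MeasureTheory.measure_eq_of_inter_eq_of_tendsto {ι : Type*} {l : Filter ι} [l.NeBot]
    {μ : Measure X} {A : Set X} {B G : ι → Set X} {c : ℝ≥0∞}
    (hG : Tendsto (fun i => μ (G i)ᶜ) l (𝓝 0)) (hAB : ∀ᶠ i in l, A ∩ G i = B i ∩ G i)
    (hB : ∀ᶠ i in l, μ (B i) = c) : μ A = c := by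
  have hlim (a : ℝ≥0∞) : Tendsto (fun i => a + μ (G i)ᶜ) l (𝓝 a) := by
    simpa using tendsto_const_nhds.add hG
  refine le_antisymm (ge_of_tendsto (hlim c) ?_) (ge_of_tendsto (hlim (μ A)) ?_) <;>
    filter_upwards [hAB, hB] with i hi hBi <;> rw [← hBi]
  · exact measure_le_add_measure_compl_of_inter_eq hi
  · exact measure_le_add_measure_compl_of_inter_eq hi.symm

end

namespace InvLimit

variable {h q : ℕ → ℕ} {α : ∀ n, ZMod (q n) → ZMod (h n)}

variable (α) in
/-- The composite `φ_n ∘ ⋯ ∘ φ_{M-1} : ℤ/h_Mℤ → ℤ/h_nℤ` (meaningful for `n ≤ M`). -/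
def proj (n : ℕ) : (M : ℕ) → ZMod (h M) → ZMod (h n)
  | 0, b => ZMod.cast b
  | M + 1, b => if n ≤ M then proj n M (phiMap (h M) (q M) (α M) b) else ZMod.cast b

@[simp]
theorem proj_self (n : ℕ) (b : ZMod (h n)) : proj α n n b = b := by
  cases n with
  | zero => exact ZMod.cast_id _ b
  | succ n => simp [proj]

theorem proj_succ {n M : ℕ} (hn : n ≤ M) (b : ZMod (h (M + 1))) :
    proj α n (M + 1) b = proj α n M (phiMap (h M) (q M) (α M) b) :=
  if_pos hn

theorem phiMap_proj {n M : ℕ} (hn : n < M) (b : ZMod (h M)) :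
    phiMap (h n) (q n) (α n) (proj α (n + 1) M b) = proj α n M b := by
  induction M with
  | zero => omega
  | succ M ih =>
    rcases (Nat.lt_succ_iff.1 hn).lt_or_eq with hlt | rfl
    · rw [proj_succ hlt, proj_succ hlt.le, ih hlt]
    · rw [proj_self, proj_succ le_rfl, proj_self]

theorem coord_eq_proj (x : InvLimit h q α) {n M : ℕ} (hn : n ≤ M) :
    x.1 n = proj α n M (x.1 M) := by
  induction M, hn using Nat.le_induction with
  | base => simp
  | succ M hn ih => rw [proj_succ hn, x.2 M, ih]

theorem ext_of_eventually_eq {x y : InvLimit h q α} (hxy : ∀ᶠ n in atTop, x.1 n = y.1 n) :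
    x = y := by
  obtain ⟨K, hK⟩ := eventually_atTop.1 hxy
  ext n : 2
  rw [coord_eq_proj x (le_max_left n K), coord_eq_proj y (le_max_left n K),
    hK _ (le_max_right n K)]

/-- Writing `x (n + 1) = j·h_n + k` as in the definition of `φ_n`, this is `k`. -/
def offset (n : ℕ) (x : InvLimit h q α) : ℕ := (x.1 (n + 1)).val % h n

def noCarry (z : ℤ) (N : ℕ) : Set (InvLimit h q α) :=
  {x | ∀ n ≥ N, (offset n x : ℤ) + z ∈ Set.Ico 0 (h n : ℤ)}

def eventuallyNoCarry : Set (InvLimit h q α) := {x | ∀ z : ℤ, ∃ N, x ∈ noCarry z N}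

theorem noCarry_mono {z : ℤ} {N M : ℕ} (hNM : N ≤ M) :
    (noCarry z N : Set (InvLimit h q α)) ⊆ noCarry z M :=
  fun _ hx n hn => hx n (hNM.trans hn)

def tailAdd (z : ℤ) (N : ℕ) (x : InvLimit h q α) : ∀ n, ZMod (h n) :=
  fun n => if N ≤ n then x.1 n + z else proj α n N (x.1 N + z)

theorem tailAdd_of_le {z : ℤ} {N n : ℕ} (x : InvLimit h q α) (hn : n ≤ N) :
    tailAdd z N x n = proj α n N (x.1 N + z) := by
  rcases hn.lt_or_eq with hn | rfl
  · exact if_neg (by omega)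
  · rw [tailAdd, if_pos le_rfl, proj_self]

theorem exists_imp_mem_noCarry (z : ℤ) (x : InvLimit h q α) :
    ∃ N, x ∈ eventuallyNoCarry → x ∈ noCarry z N := by
  by_cases hx : x ∈ eventuallyNoCarry
  · exact (hx z).imp fun _ hN _ => hN
  · exact ⟨0, fun h => absurd h hx⟩

open Classical in
/-- The implication makes the predicate satisfiable at every `x`, as `Measurable.find` needs. -/
noncomputable def shiftIndex (z : ℤ) (x : InvLimit h q α) : ℕ :=
  Nat.find (exists_imp_mem_noCarry z x)

theorem mem_noCarry_shiftIndex {z : ℤ} {x : InvLimit h q α} (hx : x ∈ eventuallyNoCarry) :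
    x ∈ noCarry z (shiftIndex z x) := by
  classical
  exact Nat.find_spec (exists_imp_mem_noCarry z x) hx

theorem measurable_coord (n : ℕ) : Measurable fun x : InvLimit h q α => x.1 n :=
  (measurable_pi_apply n).comp measurable_subtype_coe

theorem measurable_of_coord {β : Type*} [MeasurableSpace β] (n : ℕ) (f : ZMod (h n) → β) :
    Measurable fun x : InvLimit h q α => f (x.1 n) :=
  Measurable.of_discrete.comp (measurable_coord n)

theorem measurableSet_noCarry (z : ℤ) (N : ℕ) :
    MeasurableSet (noCarry z N : Set (InvLimit h q α)) := by
  simp only [noCarry, Set.ofPred_forall]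
  exact .iInter fun n => .iInter fun _ => measurableSet_setOfPred.2
    (measurable_of_coord (n + 1) fun b => ((b.val % h n : ℕ) : ℤ) + z ∈ Set.Ico 0 (h n : ℤ))

theorem measurableSet_eventuallyNoCarry :
    MeasurableSet (eventuallyNoCarry : Set (InvLimit h q α)) := by
  simp only [eventuallyNoCarry, Set.ofPred_forall, Set.ofPred_exists]
  exact .iInter fun z => .iUnion fun N => measurableSet_noCarry z N

theorem measurable_tailAdd (z : ℤ) (N : ℕ) :
    Measurable (tailAdd z N : InvLimit h q α → ∀ n, ZMod (h n)) := by
  refine measurable_pi_lambda _ fun n => ?_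
  unfold tailAdd
  split_ifs
  · exact measurable_of_coord n (· + (z : ZMod (h n)))
  · exact measurable_of_coord N fun b : ZMod (h N) => proj α n N (b + z)

section Shift

variable [∀ n, NeZero (h n)] (hrec : ∀ n, h (n + 1) = q n * h n)
include hrec

theorem tailAdd_mem {z : ℤ} {N : ℕ} {x : InvLimit h q α} (hx : x ∈ noCarry z N) (n : ℕ) :
    phiMap (h n) (q n) (α n) (tailAdd z N x (n + 1)) = tailAdd z N x n := by
  by_cases hn : N ≤ n
  · rw [tailAdd, tailAdd, if_pos (hn.trans n.le_succ), if_pos hn,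
      phiMap_add_intCast (Dvd.intro_left _ (hrec n).symm) _ _ (hx n hn), x.2 n]
  · rw [tailAdd_of_le x (by omega), tailAdd_of_le x (by omega), phiMap_proj (by omega)]

theorem offset_add_of_noCarry {z : ℤ} {N n : ℕ} {x y : InvLimit h q α} (hx : x ∈ noCarry z N)
    (hn : N ≤ n) (hy : y.1 (n + 1) = x.1 (n + 1) + z) : (offset n y : ℤ) = offset n x + z := by
  rw [offset, hy]
  exact (ZMod.val_add_intCast_div_mod (Dvd.intro_left _ (hrec n).symm) _ (hx n hn)).2

open Classical in
noncomputable def shift (z : ℤ) (x : InvLimit h q α) : InvLimit h q α :=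
  if hx : x ∈ eventuallyNoCarry then
    ⟨tailAdd z (shiftIndex z x) x, tailAdd_mem hrec (mem_noCarry_shiftIndex hx)⟩
  else x

theorem shift_of_notMem {z : ℤ} {x : InvLimit h q α} (hx : x ∉ eventuallyNoCarry) :
    shift hrec z x = x :=
  dif_neg hx

open Classical in
theorem shift_val {z : ℤ} (x : InvLimit h q α) :
    (shift hrec z x).1 =
      if x ∈ eventuallyNoCarry then tailAdd z (shiftIndex z x) x else x.1 := by
  unfold shift
  split_ifs <;> rfl

theorem eventually_shift_eq {x : InvLimit h q α} (hx : x ∈ eventuallyNoCarry) (z : ℤ) :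
    ∀ᶠ n in atTop, (shift hrec z x).1 n = x.1 n + z := by
  filter_upwards [eventually_ge_atTop (shiftIndex z x)] with n hn
  rw [shift_val, if_pos hx, tailAdd, if_pos hn]

theorem shift_coord_eq_proj {z : ℤ} {x : InvLimit h q α} (hx : x ∈ eventuallyNoCarry)
    {n M : ℕ} (hxM : x ∈ noCarry z M) (hn : n ≤ M) :
    (shift hrec z x).1 n = proj α n M (x.1 M + z) := by
  classical
  have hM : shiftIndex z x ≤ M := Nat.find_min' _ fun _ => hxM
  rw [coord_eq_proj _ hn, shift_val, if_pos hx, tailAdd, if_pos hM]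

theorem shift_mem_eventuallyNoCarry {x : InvLimit h q α} (hx : x ∈ eventuallyNoCarry) (z : ℤ) :
    shift hrec z x ∈ eventuallyNoCarry := by
  intro w
  obtain ⟨N, hN⟩ := hx (z + w)
  obtain ⟨K, hK⟩ := eventually_atTop.1 (eventually_shift_eq hrec hx z)
  refine ⟨max N (max K (shiftIndex z x)), fun n hn => ?_⟩
  have hoff := offset_add_of_noCarry hrec (mem_noCarry_shiftIndex hx)
    (by omega : shiftIndex z x ≤ n) (hK (n + 1) (by omega))
  have := hN n (by omega)
  rw [Set.mem_Ico] at this ⊢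
  omega

theorem shift_neg_shift (z : ℤ) (x : InvLimit h q α) : shift hrec (-z) (shift hrec z x) = x := by
  by_cases hx : x ∈ eventuallyNoCarry
  · apply ext_of_eventually_eq
    filter_upwards [eventually_shift_eq hrec (shift_mem_eventuallyNoCarry hrec hx z) (-z),
      eventually_shift_eq hrec hx z] with n h₁ h₂
    rw [h₁, h₂, Int.cast_neg, add_neg_cancel_right]
  · rw [shift_of_notMem hrec hx, shift_of_notMem hrec hx]

noncomputable def odometer : Equiv.Perm (InvLimit h q α) where
  toFun := shift hrec 1
  invFun := shift hrec (-1)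
  left_inv := shift_neg_shift hrec 1
  right_inv x := by simpa using shift_neg_shift hrec (-1) x

@[simp]
theorem odometer_apply (x : InvLimit h q α) : odometer hrec x = shift hrec 1 x :=
  rfl

theorem measurable_shift (z : ℤ) :
    Measurable (shift hrec z : InvLimit h q α → InvLimit h q α) := by
  classical
  show Measurable fun x => (⟨(shift hrec z x).1, (shift hrec z x).2⟩ : InvLimit h q α)
  refine Measurable.subtype_mk ?_
  rw [show (fun x => (shift hrec z x).1) = _ from funext (shift_val hrec)]
  refine Measurable.ite measurableSet_eventuallyNoCarry ?_ measurable_subtype_coe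
  exact Measurable.find (fun N => measurable_tailAdd z N)
    (fun N => (measurableSet_eventuallyNoCarry.compl.union (measurableSet_noCarry z N)).congr
      (by ext; simp [imp_iff_not_or]))
    (exists_imp_mem_noCarry z)

end Shift

theorem measurableSpace_eq_iSup_comap_coord :
    (inferInstance : MeasurableSpace (InvLimit h q α)) =
      ⨆ n, MeasurableSpace.comap (fun x : InvLimit h q α => x.1 n) inferInstance := by
  change MeasurableSpace.comap Subtype.val (⨆ n, _) = _
  simp only [MeasurableSpace.comap_iSup, MeasurableSpace.comap_comp]
  rfl

theorem monotone_comap_coord :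
    Monotone fun n => MeasurableSpace.comap (fun x : InvLimit h q α => x.1 n) inferInstance := by
  intro n M hnM
  dsimp only
  rw [show (fun x : InvLimit h q α => x.1 n) = proj α n M ∘ fun x => x.1 M from
    funext fun x => coord_eq_proj x hnM, ← MeasurableSpace.comap_comp]
  exact MeasurableSpace.comap_mono Measurable.of_discrete.comap_le

theorem ext_of_map_coord_eq {μ ν : Measure (InvLimit h q α)} [IsFiniteMeasure μ]
    (hμν : ∀ n, μ.map (fun x => x.1 n) = ν.map (fun x => x.1 n)) : μ = ν :=
  Measure.ext_of_map_eq_of_monotone_comap monotone_comap_coord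
    measurableSpace_eq_iSup_comap_coord hμν

theorem tendsto_measure_compl_noCarry {μ : Measure (InvLimit h q α)} [IsFiniteMeasure μ]
    (hae : ∀ᵐ x ∂μ, x ∈ eventuallyNoCarry) (z : ℤ) :
    Tendsto (fun M => μ (eventuallyNoCarry ∩ noCarry z M)ᶜ) atTop (𝓝 0) := by
  have hanti : Antitone fun M => (eventuallyNoCarry ∩ noCarry z M : Set (InvLimit h q α))ᶜ :=
    fun _ _ hMN => Set.compl_subset_compl.2 (Set.inter_subset_inter_right _ (noCarry_mono hMN))
  have hinter : ⋂ M, (eventuallyNoCarry ∩ noCarry z M : Set (InvLimit h q α))ᶜ =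
      eventuallyNoCarryᶜ := by
    ext x
    simp only [Set.mem_iInter, Set.mem_compl_iff, Set.mem_inter_iff, not_and]
    exact ⟨fun h hx => (hx z).elim fun N hN => h N hx hN, fun h _ hx => absurd hx h⟩
  have := tendsto_measure_iInter_atTop (μ := μ) (fun M => (measurableSet_eventuallyNoCarry.inter
    (measurableSet_noCarry z M)).compl.nullMeasurableSet) hanti ⟨0, measure_ne_top _ _⟩
  rwa [hinter, show μ eventuallyNoCarryᶜ = 0 from ae_iff.1 hae] at this

theorem two_pow_le [NeZero (h 0)] (hrec : ∀ n, h (n + 1) = q n * h n) (hq : ∀ n, 2 ≤ q n)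
    (n : ℕ) : 2 ^ n ≤ h n := by
  induction n with
  | zero => exact Nat.one_le_iff_ne_zero.2 NeZero.out
  | succ n ih => rw [hrec, pow_succ, mul_comm]; exact Nat.mul_le_mul (hq n) ih

def HasUniformMarginals (μ : Measure (InvLimit h q α)) : Prop :=
  ∀ n, μ.map (fun x => x.1 n) = ((h n : ℝ≥0∞))⁻¹ • (Measure.count : Measure (ZMod (h n)))

namespace HasUniformMarginals

variable {μ : Measure (InvLimit h q α)} (hμ : HasUniformMarginals μ)
include hμ

theorem measure_preimage_coord (n : ℕ) (S : Set (ZMod (h n))) :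
    μ ((fun x => x.1 n) ⁻¹' S) = ((h n : ℝ≥0∞))⁻¹ * Measure.count S := by
  rw [← Measure.map_apply (measurable_coord n) .of_discrete, hμ n, Measure.smul_apply,
    smul_eq_mul]

theorem isProbabilityMeasure [NeZero (h 0)] : IsProbabilityMeasure μ := by
  constructor
  rw [← Set.preimage_univ (f := fun x : InvLimit h q α => x.1 0), hμ.measure_preimage_coord,
    Measure.count_univ, ENat.card_eq_coe_natCard, Nat.card_zmod]
  exact ENNReal.inv_mul_cancel (by simp [NeZero.ne]) (by simp)

theorem measure_preimage_coord_add (M : ℕ) (w : ZMod (h M)) (S : Set (ZMod (h M))) :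
    μ ((fun x => x.1 M + w) ⁻¹' S) = μ ((fun x => x.1 M) ⁻¹' S) := by
  change μ ((fun x => x.1 M) ⁻¹' ((· + w) ⁻¹' S)) = _
  rw [← Measure.map_apply (measurable_coord M) .of_discrete,
    ← Measure.map_apply (measurable_coord M) .of_discrete, hμ M, measure_preimage_add_right]

section

variable [∀ n, NeZero (h n)] (hrec : ∀ n, h (n + 1) = q n * h n)
include hrec

theorem measure_carry_le (z : ℤ) (n : ℕ) :
    μ {x | (offset n x : ℤ) + z ∉ Set.Ico 0 (h n : ℤ)} ≤ ((h n : ℝ≥0∞))⁻¹ * (2 * z.natAbs : ℕ) := by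
  set R := (Finset.range (h n)).filter fun k : ℕ => (k : ℤ) + z ∉ Set.Ico 0 (h n : ℤ)
  have hset : {x : InvLimit h q α | (offset n x : ℤ) + z ∉ Set.Ico 0 (h n : ℤ)} =
      (fun x => x.1 (n + 1)) ⁻¹'
        ↑(Finset.univ.filter fun b : ZMod (h (n + 1)) => b.val % h n ∈ R) := by
    ext x
    have := Nat.mod_lt (x.1 (n + 1)).val (NeZero.pos (h n))
    simp only [R, offset, Set.mem_ofPred_eq, Set.mem_preimage, Finset.coe_filter,
      Finset.mem_filter, Finset.mem_univ, Finset.mem_range, true_and]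
    tauto
  have hcard := (ZMod.card_filter_val_mod_mem_le (hrec n) R).trans
    (Nat.mul_le_mul_left (q n) (Finset.card_filter_range_add_notMem_Ico_le (h n) z))
  have hq0 : (q n : ℝ≥0∞) ≠ 0 := by
    have := NeZero.ne (h (n + 1)); rw [hrec] at this; simpa using left_ne_zero_of_mul this
  have hh : (h (n + 1) : ℝ≥0∞) = q n * h n := by rw [hrec, Nat.cast_mul]
  rw [hset, hμ.measure_preimage_coord, Measure.count_apply_finset, hh,
    ENNReal.mul_inv (.inl hq0) (.inl (by simp)), mul_comm _ (h n : ℝ≥0∞)⁻¹, mul_assoc]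
  gcongr
  calc (q n : ℝ≥0∞)⁻¹ * _ ≤ (q n : ℝ≥0∞)⁻¹ * ((q n * (2 * z.natAbs) : ℕ) : ℝ≥0∞) :=
        mul_le_mul_right (Nat.cast_le.2 hcard) _
    _ = _ := by rw [Nat.cast_mul, ← mul_assoc, ENNReal.inv_mul_cancel hq0 (by simp), one_mul]

theorem ae_mem_eventuallyNoCarry (hq : ∀ n, 2 ≤ q n) :
    ∀ᵐ x ∂μ, x ∈ eventuallyNoCarry := by
  simp only [eventuallyNoCarry, Set.mem_ofPred_eq, ae_all_iff]
  intro z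
  have hsum : ∑' n, μ {x | (offset n x : ℤ) + z ∉ Set.Ico 0 (h n : ℤ)} ≠ ∞ := by
    refine ne_top_of_le_ne_top (b := ∑' n : ℕ, 2⁻¹ ^ n * ((2 * z.natAbs : ℕ) : ℝ≥0∞)) ?_
      (ENNReal.tsum_le_tsum fun n => (hμ.measure_carry_le hrec z n).trans ?_)
    · rw [ENNReal.tsum_mul_right, ENNReal.tsum_geometric, ENNReal.one_sub_inv_two, inv_inv]
      exact ENNReal.mul_ne_top (by simp) (ENNReal.natCast_ne_top _)
    · gcongr
      rw [← ENNReal.inv_pow, ENNReal.inv_le_inv]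
      exact_mod_cast two_pow_le hrec hq n
  filter_upwards [ae_eventually_notMem hsum] with x hx
  obtain ⟨N, hN⟩ := eventually_atTop.1 hx
  exact ⟨N, fun n hn => not_not.1 (hN n hn)⟩

theorem measurePreserving_shift (hae : ∀ᵐ x ∂μ, x ∈ eventuallyNoCarry) (z : ℤ) :
    MeasurePreserving (shift hrec z) μ μ := by
  have hshift := measurable_shift (α := α) hrec z
  refine ⟨hshift, ?_⟩
  have := hμ.isProbabilityMeasure
  refine ext_of_map_coord_eq fun n => ?_
  ext S
  rw [Measure.map_map (measurable_coord n) hshift,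
    Measure.map_apply ((measurable_coord n).comp hshift) .of_discrete,
    Measure.map_apply (measurable_coord n) .of_discrete]
  refine measure_eq_of_inter_eq_of_tendsto (tendsto_measure_compl_noCarry hae z)
    (B := fun M => (fun x => x.1 M + (z : ZMod (h M))) ⁻¹' (proj α n M ⁻¹' S)) ?_ ?_
  · filter_upwards [eventually_ge_atTop n] with M hM
    ext x
    simp only [Set.mem_inter_iff, Set.mem_preimage, Function.comp_apply, and_congr_left_iff]
    rintro ⟨hx, hxM⟩
    rw [shift_coord_eq_proj hrec hx hxM hM]
  · filter_upwards [eventually_ge_atTop n] with M hM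
    rw [hμ.measure_preimage_coord_add M z (proj α n M ⁻¹' S), ← Set.preimage_comp]
    congr 2
    exact funext fun x => (coord_eq_proj x hM).symm

end

end HasUniformMarginals

section Digits

variable (α) in
/-- The bijection `{0, …, h_n - 1} → ℤ/h_nℤ` under which `φ_n` becomes `a ↦ a / q_n`. -/
def digits : ∀ n, ℕ → ZMod (h n)
  | 0, a => a
  | n + 1, a => ((digits n (a / q n) - α n (a % q n : ℕ)).val + a % q n * h n : ℕ)

variable [∀ n, NeZero (h n)] (hrec : ∀ n, h (n + 1) = q n * h n)
include hrec

theorem q_pos (n : ℕ) : 0 < q n :=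
  Nat.pos_of_ne_zero (left_ne_zero_of_mul (hrec n ▸ NeZero.ne (h (n + 1))))

theorem val_digits_succ (n a : ℕ) :
    (digits α (n + 1) a).val =
      (digits α n (a / q n) - α n (a % q n : ℕ)).val + a % q n * h n := by
  refine ZMod.val_natCast_of_lt ?_
  have hv := (digits α n (a / q n) - α n (a % q n : ℕ)).val_lt
  have hj : a % q n + 1 ≤ q n := Nat.mod_lt a (q_pos hrec n)
  calc _ < (a % q n + 1) * h n := by rw [add_mul, one_mul]; omega
    _ ≤ q n * h n := Nat.mul_le_mul_right _ hj
    _ = h (n + 1) := (hrec n).symm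

theorem phiMap_digits (n a : ℕ) :
    phiMap (h n) (q n) (α n) (digits α (n + 1) a) = digits α n (a / q n) := by
  have hv := (digits α n (a / q n) - α n (a % q n : ℕ)).val_lt
  rw [phiMap, val_digits_succ hrec, Nat.add_mul_mod_self_right, Nat.mod_eq_of_lt hv,
    Nat.add_mul_div_right _ _ (NeZero.pos _), Nat.div_eq_of_lt hv, zero_add, ZMod.natCast_val,
    ZMod.cast_id, sub_add_cancel]

theorem injOn_digits (n : ℕ) : Set.InjOn (digits α n) (Set.Iio (h n)) := by
  induction n with
  | zero =>
    intro a ha b hb hab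
    simpa [digits, ZMod.val_natCast_of_lt ha, ZMod.val_natCast_of_lt hb] using
      congrArg ZMod.val hab
  | succ n ih =>
    intro a ha b hb hab
    have hval := congrArg ZMod.val hab
    have hmod : a % q n = b % q n := by
      simpa [val_digits_succ hrec, Nat.add_mul_div_right _ _ (NeZero.pos (h n)),
        Nat.div_eq_of_lt (ZMod.val_lt _)] using congrArg (· / h n) hval
    have hdiv : a / q n = b / q n := by
      have hlt (c : ℕ) (hc : c < h (n + 1)) : c / q n ∈ Set.Iio (h n) :=
        Nat.div_lt_of_lt_mul (by rwa [← hrec])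
      refine ih (hlt a ha) (hlt b hb) ?_
      simpa [phiMap_digits hrec] using congrArg (phiMap (h n) (q n) (α n)) hab
    rw [← Nat.div_add_mod a (q n), ← Nat.div_add_mod b (q n), hmod, hdiv]

theorem exists_digits_eq (n : ℕ) (t : ZMod (h n)) : ∃ a < h n, digits α n a = t := by
  have hinj : Function.Injective fun i : Fin (h n) => digits α n i :=
    fun i j hij => Fin.ext (injOn_digits hrec n i.isLt j.isLt hij)
  obtain ⟨i, hi⟩ := ((Fintype.bijective_iff_injective_and_card _).2
    ⟨hinj, by simp⟩).2 t
  exact ⟨i, i.isLt, hi⟩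

theorem natFloor_mul_succ_div (r : ℝ) (n : ℕ) : ⌊r * h (n + 1)⌋₊ / q n = ⌊r * h n⌋₊ := by
  have hq : (q n : ℝ) ≠ 0 := by exact_mod_cast (q_pos hrec n).ne'
  rw [← Nat.floor_div_natCast, hrec, Nat.cast_mul, mul_comm (q n : ℝ), ← mul_assoc,
    mul_div_assoc, div_self hq, mul_one]

variable (α) in
/-- `⌊r h_n⌋` is the integer formed by the first `n + 1` digits of `r` in the mixed radix
`(h_0, q_0, q_1, …)`; `φ_n` deletes the last of them. -/
noncomputable def ofReal (r : ℝ) : InvLimit h q α :=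
  ⟨fun n => digits α n ⌊r * h n⌋₊,
    fun n => by rw [phiMap_digits hrec, natFloor_mul_succ_div hrec]⟩

theorem measurable_ofReal : Measurable (ofReal α hrec) :=
  Measurable.subtype_mk <| measurable_pi_lambda _ fun _ =>
    Measurable.of_discrete.comp (Nat.measurable_floor.comp (measurable_id.mul_const _))

theorem hasUniformMarginals_map_ofReal :
    HasUniformMarginals ((volume.restrict (Set.Ico (0 : ℝ) 1)).map (ofReal α hrec)) := by
  intro n
  refine Measure.ext_of_singleton fun t => ?_
  obtain ⟨a, ha, rfl⟩ := exists_digits_eq (α := α) hrec n t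
  have hfiber : (fun r => (ofReal α hrec r).1 n) ⁻¹' {digits α n a} ∩ Set.Ico 0 1 =
      Set.Ico (0 : ℝ) 1 ∩ {r | ⌊r * h n⌋₊ = a} := by
    ext r
    simp only [Set.mem_inter_iff, Set.mem_preimage, Set.mem_singleton_iff, Set.mem_Ico,
      Set.mem_ofPred_eq, ofReal]
    refine ⟨fun ⟨hr, hr1⟩ => ⟨hr1, injOn_digits hrec n ?_ ha hr⟩,
      fun ⟨hr1, hr⟩ => ⟨by rw [hr], hr1⟩⟩
    have : r * h n < h n := by
      have : (0 : ℝ) < h n := Nat.cast_pos.2 (NeZero.pos (h n))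
      nlinarith [hr1.2]
    exact (Nat.floor_lt (by have := hr1.1; positivity)).2 this
  rw [Measure.map_map (measurable_coord n) (measurable_ofReal hrec),
    Measure.map_apply ((measurable_coord n).comp (measurable_ofReal hrec)) .of_discrete,
    Measure.restrict_apply' measurableSet_Ico, Function.comp_def, hfiber,
    Real.volume_Ico_inter_natFloor_mul_eq (NeZero.pos _) ha, Measure.smul_apply,
    Measure.count_singleton, smul_eq_mul, mul_one]

end Digits

end InvLimit

/-- For any `h₀ ≥ 2`, any sequence `q_n ≥ 2` with `h_{n+1} = q_n·h_n`, and
arbitrary `α_{n,j} ∈ ℤ/h_nℤ`, the inverse limit `X` carries a probability measure `μ` whose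
pushforward under each coordinate map is the uniform measure on `ℤ/h_nℤ`, and an invertible
`μ`-preserving transformation `T` such that for `μ`-a.e. `x` there is `N(x)` with
`(Tx)_n = x_n + 1` for all `n ≥ N(x)`. -/
theorem exists_adding_machine_on_invLimit
    (h q : ℕ → ℕ) (hh0 : 2 ≤ h 0) (hq : ∀ n, 2 ≤ q n)
    (hrec : ∀ n, h (n + 1) = q n * h n)
    (α : ∀ n, ZMod (q n) → ZMod (h n)) :
    ∃ μ : Measure (InvLimit h q α), IsProbabilityMeasure μ ∧
      (∀ n : ℕ, μ.map (fun x => x.1 n)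
        = ((h n : ℝ≥0∞))⁻¹ • (Measure.count : Measure (ZMod (h n)))) ∧
      ∃ T : Equiv.Perm (InvLimit h q α),
        MeasurePreserving T μ μ ∧ MeasurePreserving T.symm μ μ ∧
        ∀ᵐ x ∂μ, ∃ N : ℕ, ∀ n ≥ N, (T x).1 n = x.1 n + 1 := by
  have : NeZero (h 0) := ⟨by omega⟩
  have : ∀ n, NeZero (h n) := fun n =>
    ⟨Nat.one_le_iff_ne_zero.1 (Nat.one_le_two_pow.trans (InvLimit.two_pow_le hrec hq n))⟩
  have hμ := InvLimit.hasUniformMarginals_map_ofReal (α := α) hrec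
  have hae := hμ.ae_mem_eventuallyNoCarry hrec hq
  refine ⟨_, hμ.isProbabilityMeasure, hμ, InvLimit.odometer hrec,
    hμ.measurePreserving_shift hrec hae 1, hμ.measurePreserving_shift hrec hae (-1), ?_⟩
  filter_upwards [hae] with x hx
  refine eventually_atTop.1 ?_
  filter_upwards [InvLimit.eventually_shift_eq hrec hx 1] with n hn
  simpa using hn
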